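/- arXiv:1509.01710 — 5 statements merged into one kernel-verified Lean document; each statement's English description precedes it below -/
import Mathlib

section
/- Let (X, Σ) be a measurable space, let μ_S and μ_T be probability measures on it (the source and target distributions), and let h, h*, f_S, f_T : X → ℝ be measurable functions such that |h − f_T|, |h* − f_T|, |h − h*| are integrable with respect to μ_T and |h − f_S|, |h* − f_S|, |h − h*| are integrable with respect to μ_S. Define the risks ε_T(g₁, g₂) = ∫ |g₁ − g₂| dμ_T and ε_S(g₁, g₂) = ∫ |g₁ − g₂| dμ_S. Then ε_T(h, f_T) ≤ ε_T(h*, f_T) + ε_S(h*, f_S) + ε_S(h, f_S) + |ε_S(h, h*) − ε_T(h, h*)|. -/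
open MeasureTheory

/-- Triangle-inequality bound for the target risk in domain adaptation:
`ε_T(h, f_T) ≤ ε_T(h*, f_T) + ε_S(h*, f_S) + ε_S(h, f_S) + |ε_S(h, h*) − ε_T(h, h*)|`. -/
theorem target_risk_bound {X : Type*} [MeasurableSpace X]
    (μS μT : Measure X) [IsProbabilityMeasure μS] [IsProbabilityMeasure μT]
    (h hstar fS fT : X → ℝ)
    (hh : Measurable h) (hhstar : Measurable hstar)
    (hfS : Measurable fS) (hfT : Measurable fT)
    (int1 : Integrable (fun x => |h x - fT x|) μT)
    (int2 : Integrable (fun x => |hstar x - fT x|) μT)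
    (int3 : Integrable (fun x => |h x - hstar x|) μT)
    (int4 : Integrable (fun x => |h x - fS x|) μS)
    (int5 : Integrable (fun x => |hstar x - fS x|) μS)
    (int6 : Integrable (fun x => |h x - hstar x|) μS) :
    ∫ x, |h x - fT x| ∂μT ≤
      (∫ x, |hstar x - fT x| ∂μT) + (∫ x, |hstar x - fS x| ∂μS) +
        (∫ x, |h x - fS x| ∂μS) +
        |(∫ x, |h x - hstar x| ∂μS) - ∫ x, |h x - hstar x| ∂μT| := by
  have t1 : ∫ x, |h x - fT x| ∂μT ≤
      (∫ x, |h x - hstar x| ∂μT) + ∫ x, |hstar x - fT x| ∂μT := by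
    rw [← integral_add int3 int2]
    refine integral_mono int1 (int3.add int2) fun x => ?_
    have := abs_sub_abs_le_abs_sub (h x - fT x) (h x - hstar x)
    calc |h x - fT x| ≤ |h x - hstar x| + |(h x - fT x) - (h x - hstar x)| := by
          have := abs_sub (h x - fT x) (h x - hstar x); nlinarith [abs_sub_abs_le_abs_sub (h x - fT x) (h x - hstar x), abs_nonneg ((h x - fT x) - (h x - hstar x))]
      _ = |h x - hstar x| + |hstar x - fT x| := by ring_nf
  have t2 : ∫ x, |h x - hstar x| ∂μT ≤
      (∫ x, |h x - hstar x| ∂μS) +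
        |(∫ x, |h x - hstar x| ∂μS) - ∫ x, |h x - hstar x| ∂μT| := by
    have := abs_nonneg ((∫ x, |h x - hstar x| ∂μS) - ∫ x, |h x - hstar x| ∂μT)
    have := neg_abs_le ((∫ x, |h x - hstar x| ∂μS) - ∫ x, |h x - hstar x| ∂μT)
    linarith
  have t3 : ∫ x, |h x - hstar x| ∂μS ≤
      (∫ x, |h x - fS x| ∂μS) + ∫ x, |hstar x - fS x| ∂μS := by
    rw [← integral_add int4 int5]
    refine integral_mono int6 (int4.add int5) fun x => ?_
    calc |h x - hstar x| = |(h x - fS x) - (hstar x - fS x)| := by ring_nf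
      _ ≤ |h x - fS x| + |hstar x - fS x| := abs_sub _ _
  linarith
end

section
/- Let X ∈ ℝ^{d×n} be a matrix with no zero rows, let Λ be the diagonal d×d matrix with Λ_{ii} equal to the squared Euclidean norm of the i-th row of X, and denote by λ₁(X·Xᵀ) and λ_d(X·Xᵀ) the smallest and largest eigenvalues of X·Xᵀ and by λ₁(Λ) the smallest diagonal entry of Λ. If γ₁ > (λ_d(X·Xᵀ) − λ₁(X·Xᵀ)) / λ₁(Λ) and P = (X·Xᵀ + γ₁·Λ)⁻¹ · X·Xᵀ, then I − P·Pᵀ is a positive definite matrix. -/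
/-!
Write `A = XXᵀ`, `M = A + γ₁Λ`, so `P = M⁻¹A` and `Pᵀ = AM⁻¹`. For `x ≠ 0` put `y = M⁻¹x`; then
`xᵀ(I - PPᵀ)x = ‖My‖² - ‖Ay‖²`. By the spectral theorem `‖Ay‖ ≤ λ_d(A)‖y‖`, while
`yᵀMy ≥ (λ₁(A) + γ₁λ₁(Λ))‖y‖²` forces `‖My‖ ≥ (λ₁(A) + γ₁λ₁(Λ))‖y‖`, and the hypothesis on `γ₁`
says exactly that `λ_d(A) < λ₁(A) + γ₁λ₁(Λ)`.
-/

open Matrix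

namespace Matrix

variable {m : Type*} [Fintype m]

theorem sq_mul_dotProduct_self_le_of_mul_le_dotProduct {c : ℝ} {y w : m → ℝ} (hc : 0 ≤ c)
    (h : c * (y ⬝ᵥ y) ≤ y ⬝ᵥ w) : c ^ 2 * (y ⬝ᵥ y) ≤ w ⬝ᵥ w := by
  -- expand `0 ≤ ‖w - c • y‖²`
  have h0 := dotProduct_star_self_nonneg (w - c • y)
  simp only [star_trivial, sub_dotProduct, dotProduct_sub, smul_dotProduct, dotProduct_smul,
    smul_eq_mul, dotProduct_comm w y] at h0
  nlinarith

variable [DecidableEq m]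

theorem dotProduct_mulVec_mulVec_of_transpose_mul_self {U : Matrix m m ℝ}
    (hU : Uᵀ * U = 1) (a b : m → ℝ) : (U *ᵥ a) ⬝ᵥ (U *ᵥ b) = a ⬝ᵥ b := by
  rw [dotProduct_mulVec, vecMul_mulVec, ← mulVec_transpose, transpose_mul, transpose_transpose,
    hU, one_mulVec]

theorem iInf_mul_dotProduct_le_dotProduct_diagonal_mulVec (v y : m → ℝ) :
    (⨅ i, v i) * (y ⬝ᵥ y) ≤ y ⬝ᵥ (diagonal v *ᵥ y) := by
  simp only [dotProduct, mulVec_diagonal, Finset.mul_sum]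
  refine Finset.sum_le_sum fun i _ => ?_
  nlinarith [ciInf_le (Set.finite_range v).bddBelow i, mul_self_nonneg (y i)]

theorem diagonal_mulVec_dotProduct_diagonal_mulVec_le {v : m → ℝ} (hv : 0 ≤ v) (y : m → ℝ) :
    (diagonal v *ᵥ y) ⬝ᵥ (diagonal v *ᵥ y) ≤ (⨆ i, v i) ^ 2 * (y ⬝ᵥ y) := by
  simp only [dotProduct, mulVec_diagonal, Finset.mul_sum]
  refine Finset.sum_le_sum fun i _ => ?_
  have hvi : v i ^ 2 ≤ (⨆ i, v i) ^ 2 :=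
    pow_le_pow_left₀ (hv i) (le_ciSup (Set.finite_range v).bddAbove i) 2
  nlinarith [mul_self_nonneg (y i)]

theorem posDef_one_sub_mul_transpose_of_forall_lt {k : Type*} [Fintype k]
    {M : Matrix m m ℝ} {B : Matrix m k ℝ} (hM : IsUnit M.det)
    (h : ∀ y ≠ 0, (Bᵀ *ᵥ y) ⬝ᵥ (Bᵀ *ᵥ y) < (Mᵀ *ᵥ y) ⬝ᵥ (Mᵀ *ᵥ y)) :
    (1 - M⁻¹ * B * (M⁻¹ * B)ᵀ).PosDef := by
  rw [posDef_iff_dotProduct_mulVec]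
  refine ⟨isHermitian_one.sub ?_, fun x hx => ?_⟩
  · simpa only [conjTranspose_eq_transpose_of_trivial] using
      isHermitian_mul_conjTranspose_self (M⁻¹ * B)
  set y := M⁻¹ᵀ *ᵥ x
  have hxy : x = Mᵀ *ᵥ y := by
    rw [mulVec_mulVec, transpose_nonsing_inv, mul_nonsing_inv _ (by rwa [det_transpose]),
      one_mulVec]
  have hy : y ≠ 0 := by
    rintro hy
    rw [hy, mulVec_zero] at hxy
    exact hx hxy
  have hBy : (M⁻¹ * B)ᵀ *ᵥ x = Bᵀ *ᵥ y := by
    rw [transpose_mul, ← mulVec_mulVec]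
  rw [star_trivial, sub_mulVec, one_mulVec, dotProduct_sub, ← mulVec_mulVec, dotProduct_mulVec,
    ← mulVec_transpose, hBy, sub_pos, hxy]
  exact h y hy

namespace IsHermitian

variable {A : Matrix m m ℝ} (hA : A.IsHermitian)

theorem dotProduct_star_eigenvectorUnitary_mulVec (a b : m → ℝ) :
    (star (hA.eigenvectorUnitary : Matrix m m ℝ) *ᵥ a) ⬝ᵥ
      (star (hA.eigenvectorUnitary : Matrix m m ℝ) *ᵥ b) = a ⬝ᵥ b := by
  refine dotProduct_mulVec_mulVec_of_transpose_mul_self ?_ a b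
  rw [star_eq_conjTranspose, conjTranspose_eq_transpose_of_trivial, transpose_transpose]
  exact Unitary.coe_mul_star_self _

theorem star_eigenvectorUnitary_mulVec_mulVec (y : m → ℝ) :
    star (hA.eigenvectorUnitary : Matrix m m ℝ) *ᵥ (A *ᵥ y) =
      diagonal hA.eigenvalues *ᵥ (star (hA.eigenvectorUnitary : Matrix m m ℝ) *ᵥ y) := by
  have h := hA.spectral_theorem
  have hU := Unitary.coe_star_mul_self hA.eigenvectorUnitary
  rw [Unitary.conjStarAlgAut_apply] at h
  simp only [RCLike.ofReal_real_eq_id, Function.id_comp] at h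
  -- abstract the terms that depend on `hA`, so that `h` can rewrite `A`
  set U := (hA.eigenvectorUnitary : Matrix m m ℝ)
  set D := diagonal hA.eigenvalues
  rw [mulVec_mulVec, mulVec_mulVec, h, ← mul_assoc, ← mul_assoc, hU, one_mul]

theorem iInf_eigenvalues_mul_dotProduct_le (y : m → ℝ) :
    (⨅ i, hA.eigenvalues i) * (y ⬝ᵥ y) ≤ y ⬝ᵥ (A *ᵥ y) := by
  have h := iInf_mul_dotProduct_le_dotProduct_diagonal_mulVec hA.eigenvalues
    (star (hA.eigenvectorUnitary : Matrix m m ℝ) *ᵥ y)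
  rwa [← star_eigenvectorUnitary_mulVec_mulVec, dotProduct_star_eigenvectorUnitary_mulVec,
    dotProduct_star_eigenvectorUnitary_mulVec] at h

end IsHermitian

theorem PosSemidef.mulVec_dotProduct_mulVec_le {A : Matrix m m ℝ}
    (hA : A.PosSemidef) (y : m → ℝ) :
    (A *ᵥ y) ⬝ᵥ (A *ᵥ y) ≤ (⨆ i, hA.isHermitian.eigenvalues i) ^ 2 * (y ⬝ᵥ y) := by
  have h := diagonal_mulVec_dotProduct_diagonal_mulVec_le (fun i => hA.eigenvalues_nonneg i)
    (star (hA.isHermitian.eigenvectorUnitary : Matrix m m ℝ) *ᵥ y)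
  rwa [← hA.isHermitian.star_eigenvectorUnitary_mulVec_mulVec,
    hA.isHermitian.dotProduct_star_eigenvectorUnitary_mulVec,
    hA.isHermitian.dotProduct_star_eigenvectorUnitary_mulVec] at h

variable {A : Matrix m m ℝ} {v : m → ℝ} {γ : ℝ}

theorem PosSemidef.mulVec_dotProduct_mulVec_lt_of_gap (hA : A.PosSemidef) (hγ : 0 ≤ γ)
    (hgap : ⨆ i, hA.isHermitian.eigenvalues i <
      (⨅ i, hA.isHermitian.eigenvalues i) + γ * ⨅ i, v i) {y : m → ℝ} (hy : y ≠ 0) :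
    (A *ᵥ y) ⬝ᵥ (A *ᵥ y) < ((A + γ • diagonal v) *ᵥ y) ⬝ᵥ ((A + γ • diagonal v) *ᵥ y) := by
  set e := hA.isHermitian.eigenvalues
  have he : 0 ≤ ⨆ i, e i := Real.iSup_nonneg fun i => hA.eigenvalues_nonneg i
  have hy2 : 0 < y ⬝ᵥ y := by simpa only [star_trivial] using dotProduct_star_self_pos_iff.2 hy
  have hlower : ((⨅ i, e i) + γ * ⨅ i, v i) * (y ⬝ᵥ y) ≤ y ⬝ᵥ ((A + γ • diagonal v) *ᵥ y) := by
    rw [add_mulVec, dotProduct_add, smul_mulVec, dotProduct_smul, smul_eq_mul, add_mul, mul_assoc]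
    exact add_le_add (hA.isHermitian.iInf_eigenvalues_mul_dotProduct_le y)
      (mul_le_mul_of_nonneg_left (iInf_mul_dotProduct_le_dotProduct_diagonal_mulVec v y) hγ)
  calc (A *ᵥ y) ⬝ᵥ (A *ᵥ y) ≤ (⨆ i, e i) ^ 2 * (y ⬝ᵥ y) := hA.mulVec_dotProduct_mulVec_le y
    _ < ((⨅ i, e i) + γ * ⨅ i, v i) ^ 2 * (y ⬝ᵥ y) := by gcongr
    _ ≤ _ := sq_mul_dotProduct_self_le_of_mul_le_dotProduct (he.trans hgap.le) hlower

theorem PosSemidef.posDef_one_sub_mul_transpose_of_gap (hA : A.PosSemidef) (hv : ∀ i, 0 < v i)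
    (hγ : 0 < γ) (hgap : ⨆ i, hA.isHermitian.eigenvalues i <
      (⨅ i, hA.isHermitian.eigenvalues i) + γ * ⨅ i, v i) :
    (1 - (A + γ • diagonal v)⁻¹ * A * ((A + γ • diagonal v)⁻¹ * A)ᵀ).PosDef := by
  have hM : (A + γ • diagonal v).PosDef := PosDef.posSemidef_add hA <| by
    rw [← diagonal_smul]
    exact PosDef.diagonal fun i => mul_pos hγ (hv i)
  have hMT : (A + γ • diagonal v)ᵀ = A + γ • diagonal v :=
    (conjTranspose_eq_transpose_of_trivial _).symm.trans hM.isHermitian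
  have hAT : Aᵀ = A := (conjTranspose_eq_transpose_of_trivial A).symm.trans hA.isHermitian
  refine posDef_one_sub_mul_transpose_of_forall_lt hM.det_pos.ne'.isUnit fun y hy => ?_
  rw [hMT, hAT]
  exact hA.mulVec_dotProduct_mulVec_lt_of_gap hγ.le hgap hy

end Matrix

/-- If `γ₁ > (λ_d(XXᵀ) − λ₁(XXᵀ)) / λ₁(Λ)` and `P = (XXᵀ + γ₁Λ)⁻¹ XXᵀ`, where `Λ` is
the diagonal matrix of squared row norms of `X` (and `X` has no zero rows), then
`I − PPᵀ` is positive definite. -/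
theorem one_sub_PPt_posDef {d n : ℕ} (hd : 0 < d)
    (X : Matrix (Fin d) (Fin n) ℝ)
    (hrows : ∀ i, ∃ j, X i j ≠ 0)
    (v : Fin d → ℝ) (hv : ∀ i, v i = ∑ j, X i j ^ 2)
    (hH : (X * Xᵀ).IsHermitian) (γ₁ : ℝ)
    (hγ₁ : γ₁ > ((⨆ i, hH.eigenvalues i) - ⨅ i, hH.eigenvalues i) / ⨅ i, v i)
    (P : Matrix (Fin d) (Fin d) ℝ)
    (hP : P = (X * Xᵀ + γ₁ • Matrix.diagonal v)⁻¹ * (X * Xᵀ)) :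
    (1 - P * Pᵀ).PosDef := by
  have : Nonempty (Fin d) := ⟨⟨0, hd⟩⟩
  have hA : (X * Xᵀ).PosSemidef := by
    simpa only [conjTranspose_eq_transpose_of_trivial] using posSemidef_self_mul_conjTranspose X
  have hvpos : ∀ i, 0 < v i := fun i => by
    obtain ⟨j, hj⟩ := hrows i
    rw [hv i]
    exact Finset.sum_pos' (fun j _ => sq_nonneg _) ⟨j, Finset.mem_univ j, by positivity⟩
  have hvmin : 0 < ⨅ i, v i := by
    obtain ⟨i, hi⟩ := exists_eq_ciInf_of_finite (f := v)
    exact hi ▸ hvpos i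
  have heig : ⨅ i, hH.eigenvalues i ≤ ⨆ i, hH.eigenvalues i :=
    ciInf_le_ciSup (Set.finite_range _).bddBelow (Set.finite_range _).bddAbove
  have hγ : 0 < γ₁ := (div_nonneg (sub_nonneg.2 heig) hvmin.le).trans_lt hγ₁
  subst hP
  exact hA.posDef_one_sub_mul_transpose_of_gap hvpos hγ <| by
    linarith [(div_lt_iff₀ hvmin).1 hγ₁]
end

section
/- Let X ∈ ℝ^{d×n} be a matrix with no zero rows, let Λ be the diagonal d×d matrix with Λ_{ii} equal to the squared Euclidean norm of the i-th row of X, let γ₁ > 0, and let P = (X·Xᵀ + γ₁·Λ)⁻¹ · X·Xᵀ. Then the spectral norm (largest singular value) of P satisfies ‖P‖₂ ≤ λ_d(X·Xᵀ) / (γ₁·λ₁(Λ) + λ₁(X·Xᵀ)), where λ₁(X·Xᵀ) and λ_d(X·Xᵀ) are the smallest and largest eigenvalues of X·Xᵀ and λ₁(Λ) is the smallest diagonal entry of Λ. -/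
/-!
Write `A = XXᵀ` and `M = A + γ₁Λ`, so that `Pᵀ = A M⁻¹`. For a unit eigenvector `w` of `PPᵀ`
with eigenvalue `μ` we get `μ = ‖Pᵀw‖² = ‖Az‖²` with `z = M⁻¹w`. In the Loewner order
`M ≥ γ₁λ₁(Λ) + λ₁(A) =: δ > 0`, hence `δ‖z‖² ≤ ⟨z, Mz⟩ = ⟨z, w⟩ ≤ ‖z‖` and `‖z‖ ≤ 1/δ`; and
`0 ≤ A ≤ λ_d(A)` gives `‖Az‖ ≤ λ_d(A)‖z‖` by Cauchy–Schwarz for the form of `A`.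
-/

open Matrix

open scoped MatrixOrder

namespace Matrix

variable {ι : Type*} [Fintype ι] [DecidableEq ι]

theorem PosSemidef.dotProduct_mulVec_sq_le {A : Matrix ι ι ℝ} (hA : A.PosSemidef) (x y : ι → ℝ) :
    (x ⬝ᵥ A *ᵥ y) ^ 2 ≤ (x ⬝ᵥ A *ᵥ x) * (y ⬝ᵥ A *ᵥ y) := by
  have hsymm : (toLinearMap₂' ℝ A).IsSymm := by
    refine ⟨fun a b => ?_⟩
    have hAt : A.IsSymm := by simpa using hA.1
    rw [toLinearMap₂'_apply', toLinearMap₂'_apply', RingHom.id_apply, dotProduct_comm,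
      ← vecMul_transpose, hAt.eq, dotProduct_mulVec]
  simpa only [toLinearMap₂'_apply'] using
    LinearMap.BilinForm.apply_sq_le_of_symm (toLinearMap₂' ℝ A)
      (fun z => by simpa [toLinearMap₂'_apply'] using hA.dotProduct_mulVec_nonneg z) hsymm x y

theorem dotProduct_sq_le (x y : ι → ℝ) : (x ⬝ᵥ y) ^ 2 ≤ (x ⬝ᵥ x) * (y ⬝ᵥ y) := by
  simpa using PosSemidef.one.dotProduct_mulVec_sq_le x y

theorem le_dotProduct_mulVec_of_algebraMap_le {A : Matrix ι ι ℝ} {r : ℝ}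
    (h : algebraMap ℝ _ r ≤ A) (x : ι → ℝ) : r * (x ⬝ᵥ x) ≤ x ⬝ᵥ A *ᵥ x := by
  have := (le_iff.mp h).dotProduct_mulVec_nonneg x
  simpa [sub_mulVec, Algebra.algebraMap_eq_smul_one, smul_mulVec] using this

theorem dotProduct_mulVec_le_of_le_algebraMap {A : Matrix ι ι ℝ} {r : ℝ}
    (h : A ≤ algebraMap ℝ _ r) (x : ι → ℝ) : x ⬝ᵥ A *ᵥ x ≤ r * (x ⬝ᵥ x) := by
  have := (le_iff.mp h).dotProduct_mulVec_nonneg x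
  simpa [sub_mulVec, Algebra.algebraMap_eq_smul_one, smul_mulVec] using this

theorem IsHermitian.le_algebraMap_iSup_eigenvalues {A : Matrix ι ι ℝ} (hA : A.IsHermitian) :
    A ≤ algebraMap ℝ _ (⨆ i, hA.eigenvalues i) := by
  refine le_algebraMap_of_spectrum_le (fun r hr => ?_) hA.isSelfAdjoint
  obtain ⟨i, rfl⟩ := hA.spectrum_real_eq_range_eigenvalues ▸ hr
  exact le_ciSup (Set.finite_range _).bddAbove i

theorem IsHermitian.algebraMap_iInf_eigenvalues_le {A : Matrix ι ι ℝ} (hA : A.IsHermitian) :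
    algebraMap ℝ _ (⨅ i, hA.eigenvalues i) ≤ A := by
  refine algebraMap_le_of_le_spectrum (fun r hr => ?_) hA.isSelfAdjoint
  obtain ⟨i, rfl⟩ := hA.spectrum_real_eq_range_eigenvalues ▸ hr
  exact ciInf_le (Set.finite_range _).bddBelow i

theorem algebraMap_iInf_le_diagonal (v : ι → ℝ) : algebraMap ℝ _ (⨅ i, v i) ≤ diagonal v := by
  rw [le_iff, algebraMap_eq_diagonal, diagonal_sub, posSemidef_diagonal_iff]
  exact fun i => sub_nonneg.mpr (ciInf_le (Set.finite_range _).bddBelow i)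

theorem IsHermitian.algebraMap_le_add_smul_diagonal {A : Matrix ι ι ℝ} (hA : A.IsHermitian)
    {γ : ℝ} (hγ : 0 ≤ γ) (v : ι → ℝ) :
    algebraMap ℝ _ (γ * (⨅ i, v i) + ⨅ i, hA.eigenvalues i) ≤ A + γ • diagonal v := by
  rw [map_add, map_mul, ← Algebra.smul_def, add_comm]
  exact add_le_add hA.algebraMap_iInf_eigenvalues_le
    (smul_le_smul_of_nonneg_left (algebraMap_iInf_le_diagonal v) hγ)

theorem PosSemidef.mulVec_dotProduct_mulVec_le_s5 {A : Matrix ι ι ℝ} (hA : A.PosSemidef) {β : ℝ}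
    (hβ : A ≤ algebraMap ℝ _ β) (x : ι → ℝ) :
    (A *ᵥ x) ⬝ᵥ (A *ᵥ x) ≤ β ^ 2 * (x ⬝ᵥ x) := by
  set u := A *ᵥ x
  have hu : 0 ≤ u ⬝ᵥ u := by simpa using dotProduct_star_self_nonneg u
  have hAu : 0 ≤ u ⬝ᵥ A *ᵥ u := by simpa using hA.dotProduct_mulVec_nonneg u
  have hAx : 0 ≤ x ⬝ᵥ A *ᵥ x := by simpa using hA.dotProduct_mulVec_nonneg x
  have h : (u ⬝ᵥ u) ^ 2 ≤ (β * (u ⬝ᵥ u)) * (β * (x ⬝ᵥ x)) :=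
    calc (u ⬝ᵥ u) ^ 2 ≤ (u ⬝ᵥ A *ᵥ u) * (x ⬝ᵥ A *ᵥ x) := hA.dotProduct_mulVec_sq_le u x
      _ ≤ (β * (u ⬝ᵥ u)) * (β * (x ⬝ᵥ x)) :=
        mul_le_mul (dotProduct_mulVec_le_of_le_algebraMap hβ u)
          (dotProduct_mulVec_le_of_le_algebraMap hβ x) hAx
          (hAu.trans (dotProduct_mulVec_le_of_le_algebraMap hβ u))
  rcases hu.eq_or_lt with hu0 | hu0
  · rw [← hu0]
    exact mul_nonneg (sq_nonneg β) (by simpa using dotProduct_star_self_nonneg x)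
  · refine le_of_mul_le_mul_left ?_ hu0
    linarith

theorem sq_mul_dotProduct_inv_mulVec_le {M : Matrix ι ι ℝ} {δ : ℝ} (hδ : 0 < δ)
    (hM : algebraMap ℝ _ δ ≤ M) (w : ι → ℝ) :
    δ ^ 2 * (M⁻¹ *ᵥ w ⬝ᵥ M⁻¹ *ᵥ w) ≤ w ⬝ᵥ w := by
  have hδpd : (algebraMap ℝ (Matrix ι ι ℝ) δ).PosDef := by
    rw [algebraMap_eq_diagonal]
    exact posDef_diagonal_iff.mpr fun _ => hδ
  have hMpd : M.PosDef := by simpa using hδpd.add_posSemidef (le_iff.mp hM)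
  set z := M⁻¹ *ᵥ w
  have hMz : M *ᵥ z = w := by
    rw [mulVec_mulVec, mul_nonsing_inv _ ((isUnit_iff_isUnit_det M).mp hMpd.isUnit), one_mulVec]
  have hz : 0 ≤ z ⬝ᵥ z := by simpa using dotProduct_star_self_nonneg z
  have h : (δ * (z ⬝ᵥ z)) ^ 2 ≤ (z ⬝ᵥ z) * (w ⬝ᵥ w) :=
    calc (δ * (z ⬝ᵥ z)) ^ 2 ≤ (z ⬝ᵥ w) ^ 2 := by
          refine pow_le_pow_left₀ (by positivity) ?_ 2
          simpa [hMz] using le_dotProduct_mulVec_of_algebraMap_le hM z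
      _ ≤ (z ⬝ᵥ z) * (w ⬝ᵥ w) := dotProduct_sq_le z w
  rcases hz.eq_or_lt with hz0 | hz0
  · rw [← hz0, mul_zero]
    simpa using dotProduct_star_self_nonneg w
  · refine le_of_mul_le_mul_left ?_ hz0
    linarith

theorem IsHermitian.eigenvectorBasis_dotProduct_self {A : Matrix ι ι ℝ} (hA : A.IsHermitian)
    (i : ι) : ⇑(hA.eigenvectorBasis i) ⬝ᵥ ⇑(hA.eigenvectorBasis i) = 1 := by
  have h := real_inner_self_eq_norm_sq (hA.eigenvectorBasis i)
  rw [hA.eigenvectorBasis.orthonormal.1 i, EuclideanSpace.inner_eq_star_dotProduct] at h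
  simpa using h

theorem IsHermitian.eigenvalues_mul_transpose_eq {m n : Type*} [Fintype m] [DecidableEq m]
    [Fintype n] {B : Matrix m n ℝ} (h : (B * Bᵀ).IsHermitian) (i : m) :
    h.eigenvalues i = Bᵀ *ᵥ ⇑(h.eigenvectorBasis i) ⬝ᵥ Bᵀ *ᵥ ⇑(h.eigenvectorBasis i) := by
  rw [h.eigenvalues_eq, ← mulVec_mulVec, dotProduct_mulVec, star_trivial, ← mulVec_transpose]
  rfl

theorem IsHermitian.eigenvalues_mul_transpose_le {P A M : Matrix ι ι ℝ}
    (hPPt : (P * Pᵀ).IsHermitian) (hPt : Pᵀ = A * M⁻¹) (hA : A.PosSemidef) {β δ : ℝ}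
    (hAβ : A ≤ algebraMap ℝ _ β) (hδ : 0 < δ) (hMδ : algebraMap ℝ _ δ ≤ M) (i : ι) :
    hPPt.eigenvalues i ≤ (β / δ) ^ 2 := by
  have hw := hPPt.eigenvectorBasis_dotProduct_self i
  rw [hPPt.eigenvalues_mul_transpose_eq]
  set w := ⇑(hPPt.eigenvectorBasis i)
  set z := M⁻¹ *ᵥ w
  have hPt_w : Pᵀ *ᵥ w = A *ᵥ z := by rw [hPt, ← mulVec_mulVec]
  have hz : z ⬝ᵥ z ≤ 1 / δ ^ 2 := by
    rw [le_div_iff₀ (by positivity), mul_comm, ← hw]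
    exact sq_mul_dotProduct_inv_mulVec_le hδ hMδ w
  rw [hPt_w]
  calc A *ᵥ z ⬝ᵥ A *ᵥ z ≤ β ^ 2 * (z ⬝ᵥ z) := hA.mulVec_dotProduct_mulVec_le_s5 hAβ z
    _ ≤ β ^ 2 * (1 / δ ^ 2) := by gcongr
    _ = (β / δ) ^ 2 := by rw [div_pow, mul_one_div]

end Matrix

/-- Every singular value of `P = (XXᵀ + γ₁Λ)⁻¹ XXᵀ` (i.e. the square root of any
eigenvalue of `PPᵀ`), and in particular the spectral norm of `P`, is at most
`λ_d(XXᵀ) / (γ₁·λ₁(Λ) + λ₁(XXᵀ))`, where `Λ` is the diagonal matrix of squared row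
norms of `X` and `X` has no zero rows. -/
theorem singular_values_of_P_bounded {d n : ℕ} (hd : 0 < d)
    (X : Matrix (Fin d) (Fin n) ℝ)
    (hrows : ∀ i, ∃ j, X i j ≠ 0)
    (v : Fin d → ℝ) (hv : ∀ i, v i = ∑ j, X i j ^ 2)
    (hH : (X * Xᵀ).IsHermitian) (γ₁ : ℝ) (hγ₁ : 0 < γ₁)
    (P : Matrix (Fin d) (Fin d) ℝ)
    (hP : P = (X * Xᵀ + γ₁ • Matrix.diagonal v)⁻¹ * (X * Xᵀ))
    (hPPt : (P * Pᵀ).IsHermitian) :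
    ∀ i, Real.sqrt (hPPt.eigenvalues i) ≤
      (⨆ j, hH.eigenvalues j) / (γ₁ * (⨅ j, v j) + ⨅ j, hH.eigenvalues j) := by
  have : Nonempty (Fin d) := Fin.pos_iff_nonempty.mp hd
  intro i
  have hA : (X * Xᵀ).PosSemidef := by simpa using posSemidef_self_mul_conjTranspose X
  have hv_pos : 0 < ⨅ j, v j := by
    obtain ⟨j, hj⟩ := exists_eq_ciInf_of_finite (f := v)
    obtain ⟨k, hk⟩ := hrows j
    rw [← hj, hv]
    exact Finset.sum_pos' (fun _ _ => sq_nonneg _) ⟨k, Finset.mem_univ k, by positivity⟩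
  have hδ : 0 < γ₁ * (⨅ j, v j) + ⨅ j, hH.eigenvalues j :=
    add_pos_of_pos_of_nonneg (mul_pos hγ₁ hv_pos) (le_ciInf hA.eigenvalues_nonneg)
  have hβ : 0 ≤ ⨆ j, hH.eigenvalues j :=
    (hA.eigenvalues_nonneg i).trans (le_ciSup (Set.finite_range _).bddAbove i)
  have hPt : Pᵀ = X * Xᵀ * (X * Xᵀ + γ₁ • diagonal v)⁻¹ := by
    have hA_symm : (X * Xᵀ).IsSymm := by simpa using hH
    rw [hP, transpose_mul, transpose_nonsing_inv, transpose_add, transpose_smul, diagonal_transpose,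
      hA_symm.eq]
  rw [Real.sqrt_le_left (div_nonneg hβ hδ.le)]
  exact hPPt.eigenvalues_mul_transpose_le hPt hA hH.le_algebraMap_iSup_eigenvalues hδ
    (hH.algebraMap_le_add_smul_diagonal hγ₁.le v) i
end

section
/- Let Λ and B be real positive semidefinite d×d matrices with B ⪯ Λ in the Loewner order, and let S be any real symmetric d×d matrix. Then tr(S·B·S·B) ≤ tr(S·Λ·S·Λ). -/
open Matrix

/-!
Conjugating by the symmetric matrix `S` preserves positive semidefiniteness, and
`M ↦ tr(A M)` is monotone in the Loewner order whenever `A ⪰ 0`. Hence, with `A = S B S` and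
then `A = S Λ S`,
`tr(S B S B) ≤ tr(S B S Λ) = tr(S Λ S B) ≤ tr(S Λ S Λ)`,
the middle equality being cyclicity of the trace.
-/

namespace Matrix.PosSemidef

open scoped ComplexOrder

variable {𝕜 n : Type*} [RCLike 𝕜] [Fintype n] {A M N : Matrix n n 𝕜}

theorem trace_mul_nonneg (hA : A.PosSemidef) (hM : M.PosSemidef) : 0 ≤ (A * M).trace := by
  classical
  obtain ⟨X, rfl⟩ : ∃ X : Matrix n n 𝕜, A = star X * X := by
    open scoped MatrixOrder Matrix.Norms.L2Operator in
    exact CStarAlgebra.nonneg_iff_eq_star_mul_self.mp hA.nonneg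
  rw [Matrix.mul_assoc, trace_mul_comm]
  exact (hM.mul_mul_conjTranspose_same X).trace_nonneg

theorem trace_mul_le_trace_mul (hA : A.PosSemidef) (hMN : (N - M).PosSemidef) :
    (A * M).trace ≤ (A * N).trace := by
  simpa only [Matrix.mul_sub, trace_sub, sub_nonneg] using hA.trace_mul_nonneg hMN

end Matrix.PosSemidef

/-- If `Λ` and `B` are real positive semidefinite matrices with `B ⪯ Λ` in the Loewner
order and `S` is any real symmetric matrix, then `tr(S·B·S·B) ≤ tr(S·Λ·S·Λ)`. -/
theorem chained_trace_estimate {d : ℕ} (Λ B S : Matrix (Fin d) (Fin d) ℝ)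
    (hΛ : Λ.PosSemidef) (hB : B.PosSemidef) (hBΛ : (Λ - B).PosSemidef)
    (hS : Sᵀ = S) :
    (S * B * S * B).trace ≤ (S * Λ * S * Λ).trace := by
  have hSH : Sᴴ = S := (conjTranspose_eq_transpose_of_trivial S).trans hS
  have hSBS : (S * B * S).PosSemidef := by
    simpa only [hSH] using hB.mul_mul_conjTranspose_same S
  have hSΛS : (S * Λ * S).PosSemidef := by
    simpa only [hSH] using hΛ.mul_mul_conjTranspose_same S
  calc (S * B * S * B).trace
      ≤ (S * B * S * Λ).trace := hSBS.trace_mul_le_trace_mul hBΛ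
    _ = (S * Λ * S * B).trace := by
      rw [Matrix.mul_assoc (S * B), trace_mul_comm, ← Matrix.mul_assoc]
    _ ≤ (S * Λ * S * Λ).trace := hSΛS.trace_mul_le_trace_mul hBΛ
end

section
/- Let X_S ∈ ℝ^{d×n_s} and X_T ∈ ℝ^{d×n_t} with n_s, n_t ≥ 1, let X ∈ ℝ^{d×(n_s+n_t)} be the horizontal concatenation of X_S and X_T, and assume X has no zero rows. Let Λ be the diagonal d×d matrix with Λ_{ii} equal to the squared Euclidean norm of the i-th row of X, and set ΔM = (1/n_s)·X_S·X_Sᵀ − (1/n_t)·X_T·X_Tᵀ. If γ₁ ≥ (λ_d(X·Xᵀ) − λ₁(X·Xᵀ)) / λ₁(Λ), where λ₁(X·Xᵀ) and λ_d(X·Xᵀ) are the smallest and largest eigenvalues of X·Xᵀ and λ₁(Λ) is the smallest diagonal entry of Λ, and P = (X·Xᵀ + γ₁·Λ)⁻¹ · X·Xᵀ, then ‖ΔM‖_F² ≥ ‖Pᵀ·ΔM·P‖_F². -/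
open Matrix

attribute [local instance] Matrix.frobeniusNormedAddCommGroup

open scoped MatrixOrder ComplexOrder

/-!
Write `A = XXᵀ` and `B = A + γ₁Λ`, so `P = B⁻¹A`. The bound on `γ₁` makes
`γ₁Λ ≥ (λ_d - λ₁)·1`, and since `A ≥ λ₁·1` this gives `A ≤ λ_d·1 ≤ B` in the Loewner order.
Hence `A² ≤ λ_d A ≤ λ_d B ≤ B²`, and conjugating by `B⁻¹` yields `PPᵀ ≤ 1`.
A contraction cannot increase the Frobenius norm from either side, because
`‖PᵀM‖_F² = tr(Mᵀ PPᵀ M) ≤ tr(MᵀM)`.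
-/

namespace Matrix

section Loewner

variable {𝕜 n : Type*} [RCLike 𝕜] [DecidableEq n] {A B : Matrix n n 𝕜} {c : ℝ}

theorem posDef_of_smul_one_le (hc : 0 < c) (h : c • 1 ≤ B) : B.PosDef := by
  rw [← add_sub_cancel (c • 1) B]
  exact (PosDef.one.smul hc).add_posSemidef (le_iff.1 h)

variable [Fintype n]

theorem IsHermitian.le_smul_one_iff (hA : A.IsHermitian) :
    A ≤ c • 1 ↔ ∀ i, hA.eigenvalues i ≤ c := by
  rw [← Algebra.algebraMap_eq_smul_one, le_algebraMap_iff_spectrum_le hA.isSelfAdjoint,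
    hA.spectrum_real_eq_range_eigenvalues, Set.forall_mem_range]

theorem IsHermitian.smul_one_le_iff (hA : A.IsHermitian) :
    c • 1 ≤ A ↔ ∀ i, c ≤ hA.eigenvalues i := by
  rw [← Algebra.algebraMap_eq_smul_one, algebraMap_le_iff_le_spectrum hA.isSelfAdjoint,
    hA.spectrum_real_eq_range_eigenvalues, Set.forall_mem_range]

theorem IsHermitian.le_iSup_eigenvalues_smul_one (hA : A.IsHermitian) :
    A ≤ (⨆ i, hA.eigenvalues i) • 1 :=
  hA.le_smul_one_iff.2 fun i => le_ciSup (Set.finite_range _).bddAbove i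

theorem IsHermitian.iInf_eigenvalues_smul_one_le (hA : A.IsHermitian) :
    (⨅ i, hA.eigenvalues i) • 1 ≤ A :=
  hA.smul_one_le_iff.2 fun i => ciInf_le (Set.finite_range _).bddBelow i

theorem sqrt_mul_self_mul_sqrt (hA : 0 ≤ A) : CFC.sqrt A * A * CFC.sqrt A = A * A := by
  set s := CFC.sqrt A
  have hs : s * s = A := CFC.sqrt_mul_sqrt_self A hA
  rw [← hs]
  simp only [mul_assoc]

theorem sqrt_mul_smul_one_mul_sqrt (hA : 0 ≤ A) :
    CFC.sqrt A * (c • 1) * CFC.sqrt A = c • A := by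
  rw [mul_smul_comm, mul_one, smul_mul_assoc, CFC.sqrt_mul_sqrt_self A hA]

theorem mul_self_le_smul_of_le_smul_one (hA : 0 ≤ A) (h : A ≤ c • 1) : A * A ≤ c • A := by
  simpa only [sqrt_mul_self_mul_sqrt hA, sqrt_mul_smul_one_mul_sqrt hA] using
    conjugate_le_conjugate_of_nonneg h (CFC.sqrt_nonneg A)

theorem smul_le_mul_self_of_smul_one_le (hB : 0 ≤ B) (h : c • 1 ≤ B) : c • B ≤ B * B := by
  simpa only [sqrt_mul_self_mul_sqrt hB, sqrt_mul_smul_one_mul_sqrt hB] using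
    conjugate_le_conjugate_of_nonneg h (CFC.sqrt_nonneg B)

/-- Squaring is not monotone in the Loewner order, but it is across a scalar separator. -/
theorem mul_self_le_mul_self_of_le_smul_one_le (hA : 0 ≤ A) (hc : 0 ≤ c) (hAc : A ≤ c • 1)
    (hcB : c • 1 ≤ B) : A * A ≤ B * B :=
  calc A * A ≤ c • A := mul_self_le_smul_of_le_smul_one hA hAc
    _ ≤ c • B := smul_le_smul_of_nonneg_left (hAc.trans hcB) hc
    _ ≤ B * B := smul_le_mul_self_of_smul_one_le ((smul_nonneg hc zero_le_one).trans hcB) hcB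

theorem mul_conjTranspose_le_one_of_mul_self_le (hA : A.IsHermitian) (hB : B.IsHermitian)
    (hBdet : IsUnit B.det) (h : A * A ≤ B * B) : (B⁻¹ * A) * (B⁻¹ * A)ᴴ ≤ 1 := by
  have hBinv : star B⁻¹ = B⁻¹ := by
    rw [star_eq_conjTranspose, conjTranspose_nonsing_inv, hB.eq]
  have hconj : (B⁻¹ * A) * (B⁻¹ * A)ᴴ = star B⁻¹ * (A * A) * B⁻¹ := by
    rw [hBinv, conjTranspose_mul, hA.eq, conjTranspose_nonsing_inv, hB.eq]
    simp only [mul_assoc]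
  have hone : star B⁻¹ * (B * B) * B⁻¹ = 1 := by
    rw [hBinv, ← mul_assoc, nonsing_inv_mul _ hBdet, one_mul, mul_nonsing_inv _ hBdet]
  rw [hconj, ← hone]
  exact star_left_conjugate_le_conjugate h B⁻¹

end Loewner

section Frobenius

variable {𝕜 m n k : Type*} [RCLike 𝕜] [Fintype m] [Fintype n] [Fintype k]

theorem frobenius_norm_sq_eq_re_trace (A : Matrix m n 𝕜) :
    ‖A‖ ^ 2 = RCLike.re (Aᴴ * A).trace := by
  rw [frobenius_norm_def, ← Real.rpow_natCast, ← Real.rpow_mul (by positivity)]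
  simp only [Real.rpow_two, trace, diag, mul_apply, conjTranspose_apply, RCLike.star_def,
    RCLike.conj_mul, map_sum]
  rw [Finset.sum_comm]
  norm_num

theorem frobenius_norm_conjTranspose_mul_le [DecidableEq n] {P : Matrix n k 𝕜}
    (hP : P * Pᴴ ≤ 1) (M : Matrix n m 𝕜) : ‖Pᴴ * M‖ ≤ ‖M‖ := by
  have hgap : 0 ≤ (Mᴴ * (1 - P * Pᴴ) * M).trace :=
    ((le_iff.1 hP).conjTranspose_mul_mul_same M).trace_nonneg
  have hsq : ‖Pᴴ * M‖ ^ 2 ≤ ‖M‖ ^ 2 := by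
    rw [frobenius_norm_sq_eq_re_trace, frobenius_norm_sq_eq_re_trace, ← sub_nonneg, ← map_sub]
    convert (RCLike.nonneg_iff.1 hgap).1 using 2
    rw [← trace_sub, conjTranspose_mul, conjTranspose_conjTranspose, Matrix.mul_sub,
      Matrix.sub_mul, Matrix.mul_one]
    simp only [Matrix.mul_assoc]
  exact (pow_le_pow_iff_left₀ (norm_nonneg _) (norm_nonneg _) two_ne_zero).1 hsq

theorem frobenius_norm_mul_le [DecidableEq n] {P : Matrix n k 𝕜} (hP : P * Pᴴ ≤ 1)
    (M : Matrix m n 𝕜) : ‖M * P‖ ≤ ‖M‖ := by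
  rw [← frobenius_norm_conjTranspose (M * P), conjTranspose_mul,
    ← frobenius_norm_conjTranspose M]
  exact frobenius_norm_conjTranspose_mul_le hP Mᴴ

end Frobenius

theorem apply_self_le_of_le_smul_one {n : Type*} [DecidableEq n]
    {A : Matrix n n ℝ} {c : ℝ} (h : A ≤ c • 1) (i : n) : A i i ≤ c := by
  simpa using (le_iff.1 h).diag_nonneg (i := i)

theorem IsHermitian.iSup_eigenvalues_smul_one_le_add_smul_diagonal {n : Type*} [Fintype n]
    [DecidableEq n] [Nonempty n] {A : Matrix n n ℝ} (hA : A.IsHermitian) {v : n → ℝ}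
    (hv : ∀ i, 0 < v i) {γ : ℝ}
    (hγ : ((⨆ i, hA.eigenvalues i) - ⨅ i, hA.eigenvalues i) / ⨅ i, v i ≤ γ) :
    (⨆ i, hA.eigenvalues i) • 1 ≤ A + γ • diagonal v := by
  set lmax := ⨆ i, hA.eigenvalues i
  set lmin := ⨅ i, hA.eigenvalues i
  obtain ⟨j, hj⟩ := exists_eq_ciInf_of_finite (f := v)
  have hvmin : 0 < ⨅ i, v i := hj ▸ hv j
  have hγ₀ : 0 ≤ γ := le_trans (div_nonneg (sub_nonneg.2 (ciInf_le_ciSup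
    (Set.finite_range _).bddBelow (Set.finite_range _).bddAbove)) hvmin.le) hγ
  have hgap : (lmax - lmin) • (1 : Matrix n n ℝ) ≤ γ • diagonal v := by
    rw [smul_one_eq_diagonal, ← diagonal_smul, le_iff, diagonal_sub, posSemidef_diagonal_iff]
    intro i
    rw [sub_nonneg, Pi.smul_apply, smul_eq_mul]
    calc lmax - lmin ≤ γ * ⨅ i, v i := (div_le_iff₀ hvmin).1 hγ
      _ ≤ γ * v i := mul_le_mul_of_nonneg_left (ciInf_le (Set.finite_range _).bddBelow i) hγ₀
  calc lmax • (1 : Matrix n n ℝ) = lmin • 1 + (lmax - lmin) • 1 := by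
        rw [← add_smul, add_sub_cancel]
    _ ≤ A + γ • diagonal v := add_le_add hA.iInf_eigenvalues_smul_one_le hgap

end Matrix

theorem sfl_layer_decreases_moment_distance_general {d ns nt : ℕ} (hd : 0 < d)
    (X : Matrix (Fin d) (Fin ns ⊕ Fin nt) ℝ)
    (hrows : ∀ i, ∃ j, X i j ≠ 0)
    (v : Fin d → ℝ) (hv : ∀ i, v i = ∑ j, X i j ^ 2)
    (ΔM : Matrix (Fin d) (Fin d) ℝ)
    (hH : (X * Xᵀ).IsHermitian) (γ₁ : ℝ)
    (hγ₁ : γ₁ ≥ ((⨆ i, hH.eigenvalues i) - ⨅ i, hH.eigenvalues i) / ⨅ i, v i)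
    (P : Matrix (Fin d) (Fin d) ℝ)
    (hP : P = (X * Xᵀ + γ₁ • Matrix.diagonal v)⁻¹ * (X * Xᵀ)) :
    ‖Pᵀ * ΔM * P‖ ^ 2 ≤ ‖ΔM‖ ^ 2 := by
  have : Nonempty (Fin d) := ⟨⟨0, hd⟩⟩
  set A := X * Xᵀ
  set B := A + γ₁ • diagonal v
  set lmax := ⨆ i, hH.eigenvalues i
  have hv_pos : ∀ i, 0 < v i := fun i => by
    obtain ⟨j, hj⟩ := hrows i
    rw [hv i]
    exact Finset.sum_pos' (fun _ _ => sq_nonneg _) ⟨j, Finset.mem_univ j, by positivity⟩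
  have hA₀ : 0 ≤ A :=
    (conjTranspose_eq_transpose_of_trivial X ▸ posSemidef_self_mul_conjTranspose X).nonneg
  have hA_le : A ≤ lmax • 1 := hH.le_iSup_eigenvalues_smul_one
  have hB_ge : lmax • 1 ≤ B := hH.iSup_eigenvalues_smul_one_le_add_smul_diagonal hv_pos hγ₁
  have hlmax : 0 < lmax := by
    let i : Fin d := ⟨0, hd⟩
    have hA_ii : A i i = v i := by simp [A, mul_apply, hv, sq]
    exact (hv_pos i).trans_le (hA_ii ▸ apply_self_le_of_le_smul_one hA_le i)
  have hB := posDef_of_smul_one_le hlmax hB_ge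
  have hPP : P * Pᴴ ≤ 1 := hP ▸ mul_conjTranspose_le_one_of_mul_self_le hH hB.isHermitian
    hB.det_pos.ne'.isUnit (mul_self_le_mul_self_of_le_smul_one_le hA₀ hlmax.le hA_le hB_ge)
  rw [← conjTranspose_eq_transpose_of_trivial]
  gcongr
  exact (frobenius_norm_mul_le hPP _).trans (frobenius_norm_conjTranspose_mul_le hPP ΔM)

/-- One layer of the simple feature learning algorithm does not increase the distance
between the second moments: if `X = [X_S, X_T]` has no zero rows, `Λ` is the diagonal
matrix of squared row norms of `X`, `ΔM = (1/n_s)X_S X_Sᵀ − (1/n_t)X_T X_Tᵀ`,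
`γ₁ ≥ (λ_d(XXᵀ) − λ₁(XXᵀ)) / λ₁(Λ)` and `P = (XXᵀ + γ₁Λ)⁻¹ XXᵀ`, then
`‖ΔM‖_F² ≥ ‖Pᵀ·ΔM·P‖_F²`. -/
theorem sfl_layer_decreases_moment_distance {d ns nt : ℕ} (hd : 0 < d)
    (hns : 1 ≤ ns) (hnt : 1 ≤ nt)
    (XS : Matrix (Fin d) (Fin ns) ℝ) (XT : Matrix (Fin d) (Fin nt) ℝ)
    (X : Matrix (Fin d) (Fin ns ⊕ Fin nt) ℝ) (hX : X = Matrix.fromCols XS XT)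
    (hrows : ∀ i, ∃ j, X i j ≠ 0)
    (v : Fin d → ℝ) (hv : ∀ i, v i = ∑ j, X i j ^ 2)
    (ΔM : Matrix (Fin d) (Fin d) ℝ)
    (hΔM : ΔM = (1 / (ns : ℝ)) • (XS * XSᵀ) - (1 / (nt : ℝ)) • (XT * XTᵀ))
    (hH : (X * Xᵀ).IsHermitian) (γ₁ : ℝ)
    (hγ₁ : γ₁ ≥ ((⨆ i, hH.eigenvalues i) - ⨅ i, hH.eigenvalues i) / ⨅ i, v i)
    (P : Matrix (Fin d) (Fin d) ℝ)
    (hP : P = (X * Xᵀ + γ₁ • Matrix.diagonal v)⁻¹ * (X * Xᵀ)) :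
    ‖Pᵀ * ΔM * P‖ ^ 2 ≤ ‖ΔM‖ ^ 2 :=
  sfl_layer_decreases_moment_distance_general hd X hrows v hv ΔM hH γ₁ hγ₁ P hP
end
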